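/- arXiv:1101.5770 — 3 statements merged into one kernel-verified Lean document; each statement's English description precedes it below -/
import Mathlib

section
/- The map f : I_n → I_{n-1} × {0,1} defined by f(w) = (π(w), 0) if the letter n does not occur in w, and f(w) = (π(w), 1) if n occurs in w, where π(w) deletes the letter n from w, is a surjective rank-preserving order-preserving map of posets. -/
/-- Injective words over the alphabet `{1, …, n}`. -/
def NWord (n : ℕ) : Type := {l : List ℕ // l.Nodup ∧ ∀ x ∈ l, 1 ≤ x ∧ x ≤ n}

/-- Deletion of the letter `n` from an injective word over `{1, …, n}`. -/
def delTop (n : ℕ) (w : NWord n) : NWord (n - 1) :=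
  ⟨w.val.erase n, by
    obtain ⟨hnd, hmem⟩ := w.prop
    refine ⟨hnd.erase n, fun x hx => ?_⟩
    rw [hnd.mem_erase_iff] at hx
    have := hmem x hx.2
    omega⟩

/-- The map `f : I_n → I_{n-1} × {0,1}`, sending `w` to `(π(w), 0)` if the
letter `n` does not occur in `w` and to `(π(w), 1)` otherwise, where `π`
deletes the letter `n`. -/
def injMap (n : ℕ) (w : NWord n) : NWord (n - 1) × Bool :=
  (delTop n w, decide (n ∈ w.val))

theorem List.length_erase_add_toNat_decide_mem {α : Type*} [DecidableEq α] (a : α) (l : List α) :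
    (l.erase a).length + (decide (a ∈ l)).toNat = l.length := by
  by_cases h : a ∈ l
  · rw [decide_eq_true h, Bool.toNat_true, List.length_erase_add_one h]
  · simp [h, List.erase_of_not_mem h]

namespace NWord

theorem top_not_mem {n : ℕ} (w : NWord (n - 1)) : n ∉ w.val := fun h => by
  have := w.prop.2 n h
  omega

def castLE {m n : ℕ} (h : m ≤ n) (w : NWord m) : NWord n :=
  ⟨w.val, w.prop.1, fun x hx => by have := w.prop.2 x hx; omega⟩

def consTop {n : ℕ} (hn : 1 ≤ n) (w : NWord (n - 1)) : NWord n :=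
  ⟨n :: w.val, List.nodup_cons.2 ⟨top_not_mem w, w.prop.1⟩, fun x hx => by
    rcases List.mem_cons.1 hx with rfl | h
    · omega
    · have := w.prop.2 x h; omega⟩

end NWord

theorem injMap_castLE {n : ℕ} (w : NWord (n - 1)) :
    injMap n (w.castLE (Nat.sub_le n 1)) = (w, false) := by
  have h := w.top_not_mem
  simp only [injMap, delTop, NWord.castLE, List.erase_of_not_mem h, h, decide_false]
  rfl

theorem injMap_consTop {n : ℕ} (hn : 1 ≤ n) (w : NWord (n - 1)) :
    injMap n (w.consTop hn) = (w, true) := by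
  simp only [injMap, delTop, NWord.consTop, List.erase_cons_head, List.mem_cons_self,
    decide_true]
  rfl

theorem injMap_surjective {n : ℕ} (hn : 1 ≤ n) : Function.Surjective (injMap n) := by
  rintro ⟨w, _ | _⟩
  · exact ⟨_, injMap_castLE w⟩
  · exact ⟨_, injMap_consTop hn w⟩

theorem injMap_rank {n : ℕ} (w : NWord n) :
    (injMap n w).1.val.length + (injMap n w).2.toNat = w.val.length :=
  List.length_erase_add_toNat_decide_mem n w.val

theorem injMap_mono {n : ℕ} {u v : NWord n} (huv : u.val.Sublist v.val) :
    (injMap n u).1.val.Sublist (injMap n v).1.val ∧ (injMap n u).2 ≤ (injMap n v).2 :=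
  ⟨huv.erase n, Bool.le_iff_imp.2 fun h => decide_eq_true (huv.mem (of_decide_eq_true h))⟩

/-- The map `f : I_n → I_{n-1} × {0,1}` is a surjective, rank-preserving,
order-preserving map of posets, where `I_n` carries the subword order graded
by length, `{0,1}` is the chain `false < true`, and the product is ordered
componentwise and graded by length plus the second coordinate. -/
theorem stmt_13 {n : ℕ} (hn : 2 ≤ n) :
    Function.Surjective (injMap n) ∧
    (∀ w : NWord n,
      (injMap n w).1.val.length + ((injMap n w).2).toNat = w.val.length) ∧
    (∀ u v : NWord n, u.val.Sublist v.val →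
      (injMap n u).1.val.Sublist (injMap n v).1.val ∧
        (injMap n u).2 ≤ (injMap n v).2) :=
  ⟨injMap_surjective (by omega), injMap_rank, fun _ _ => injMap_mono⟩
end

section
/- With f : I_n → I_{n-1} × {0,1} as above (f(w) = (π(w), [n occurs in w])), for every q in I_{n-1} × {0,1}, the preimage of the order ideal generated by q equals the order ideal generated by the finite set f⁻¹(q), i.e., f⁻¹(⟨q⟩) = ⟨f⁻¹(q)⟩. -/
/-!
A word `w` lies in `f⁻¹(⟨q⟩)` when `w` with `n` deleted is a subword of `q.1`, and `n ∈ w`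
forces `q.2 = 1`. To lift `w` into the fiber `f⁻¹(q)`, split `w = w₁ n w₂`; the subword
embedding of `w₁ w₂` into `q.1` splits `q.1 = r₁ r₂` with `w₁ ⊑ r₁`, `w₂ ⊑ r₂`, and
`v = r₁ n r₂` lies over `q` and contains `w`. If `n ∉ w` one takes `v = q.1` or `v = q.1 n`.
The other inclusion holds because deleting a letter is monotone for the subword order.
-/

namespace List

variable {α : Type*} [DecidableEq α] {a : α} {l m : List α}

theorem exists_perm_cons_erase_eq_of_erase_sublist (hm : a ∉ m) (h : l.erase a <+ m) :
    ∃ m', m' ~ a :: m ∧ m'.erase a = m ∧ l <+ m' := by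
  by_cases ha : a ∈ l
  · obtain ⟨l₁, l₂, -, rfl, herase⟩ := exists_erase_eq ha
    rw [herase] at h
    obtain ⟨r₁, r₂, rfl, h₁, h₂⟩ := append_sublist_iff.mp h
    have hr₁ : a ∉ r₁ := fun h => hm (mem_append_left _ h)
    exact ⟨r₁ ++ a :: r₂, perm_middle, by rw [erase_append_right _ hr₁, erase_cons_head],
      h₁.append (h₂.cons_cons a)⟩
  · refine ⟨m ++ [a], perm_append_singleton a m, by simp [erase_append_right _ hm], ?_⟩
    rw [erase_of_not_mem ha] at h
    exact h.trans (sublist_append_left m [a])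

end List

namespace NWord

variable {n : ℕ}

theorem top_notMem (u : NWord (n - 1)) : n ∉ u.val := fun h => by
  have := u.prop.2 n h
  omega

def ofSubsetCons (hn : 1 ≤ n) (u : NWord (n - 1)) (l : List ℕ) (hl : l.Nodup)
    (hsub : l ⊆ n :: u.val) : NWord n :=
  ⟨l, hl, fun x hx => by
    rcases List.mem_cons.mp (hsub hx) with rfl | hx
    · omega
    · have := u.prop.2 x hx
      omega⟩

theorem injMap_eq_iff (v : NWord n) (q : NWord (n - 1) × Bool) :
    injMap n v = q ↔ v.val.erase n = q.1.val ∧ decide (n ∈ v.val) = q.2 := by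
  simp only [injMap, Prod.ext_iff]
  exact and_congr_left' ⟨congrArg Subtype.val, fun h => Subtype.ext h⟩

theorem exists_injMap_eq_of_erase_sublist (hn : 1 ≤ n) {w : NWord n}
    {q : NWord (n - 1) × Bool} (hw : (w.val.erase n).Sublist q.1.val)
    (htop : n ∈ w.val → q.2 = true) :
    ∃ v : NWord n, injMap n v = q ∧ w.val.Sublist v.val := by
  have hq := top_notMem q.1
  cases hq₂ : q.2
  · have hnw : n ∉ w.val := fun h => by simpa [hq₂] using htop h
    refine ⟨ofSubsetCons hn q.1 q.1.val q.1.prop.1 (List.subset_cons_self _ _), ?_, ?_⟩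
    · refine (injMap_eq_iff _ _).2 ⟨List.erase_of_not_mem hq, ?_⟩
      rw [hq₂]
      exact decide_eq_false hq
    · rwa [List.erase_of_not_mem hnw] at hw
  · obtain ⟨m, hperm, herase, hwm⟩ := List.exists_perm_cons_erase_eq_of_erase_sublist hq hw
    have hm : m.Nodup := hperm.nodup_iff.2 (List.nodup_cons.2 ⟨hq, q.1.prop.1⟩)
    refine ⟨ofSubsetCons hn q.1 m hm hperm.subset, (injMap_eq_iff _ _).2 ⟨herase, ?_⟩, hwm⟩
    rw [hq₂]
    exact decide_eq_true (hperm.mem_iff.2 List.mem_cons_self)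

theorem injMap_le_of_sublist {w v : NWord n} (h : w.val.Sublist v.val) :
    (injMap n w).1.val.Sublist (injMap n v).1.val ∧ (injMap n w).2 ≤ (injMap n v).2 :=
  ⟨h.erase n, Bool.le_iff_imp.2 fun hw => decide_eq_true (h.subset (of_decide_eq_true hw))⟩

end NWord

/-- For every `q ∈ I_{n-1} × {0,1}`, the preimage under `f` of the order
ideal generated by `q` equals the order ideal generated by the fiber
`f⁻¹(q)`: `f⁻¹(⟨q⟩) = ⟨f⁻¹(q)⟩`. -/
theorem stmt_14 {n : ℕ} (hn : 1 ≤ n) (q : NWord (n - 1) × Bool) :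
    {w : NWord n |
        (injMap n w).1.val.Sublist q.1.val ∧ (injMap n w).2 ≤ q.2} =
      {w : NWord n | ∃ v : NWord n, injMap n v = q ∧ w.val.Sublist v.val} := by
  ext w
  constructor
  · rintro ⟨hw, htop⟩
    exact NWord.exists_injMap_eq_of_erase_sublist hn hw
      fun h => Bool.le_iff_imp.1 htop (decide_eq_true h)
  · rintro ⟨v, rfl, h⟩
    exact NWord.injMap_le_of_sublist h
end

section
/- In the hyperoctahedral group B_n (signed permutations of {±1,…,±n}, i.e., permutations τ of {±1,…,±n} with τ(−i) = −τ(i)), a fixed-point-free element w lying below the Coxeter element in absolute order and of absolute length exactly n/2 (n even) must be a product of n/2 disjoint paired transpositions. -/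
/-- A signed permutation of `{±1, …, ±n}`, modelled as a permutation of `ℤ`
which commutes with negation and fixes every integer of absolute value
greater than `n`. -/
def IsSignedPerm (n : ℕ) (w : Equiv.Perm ℤ) : Prop :=
  (∀ i : ℤ, w (-i) = -(w i)) ∧ ∀ i : ℤ, (n : ℤ) < |i| → w i = i

/-- A reflection of the hyperoctahedral group `B_n`: either a balanced
1-cycle `[a]` (the case `b = -a`) or a paired transposition `((a, ±b))`. -/
def IsReflB (n : ℕ) (t : Equiv.Perm ℤ) : Prop :=
  ∃ a b : ℤ, 0 < a ∧ a ≤ (n : ℤ) ∧ b ≠ a ∧ b ≠ 0 ∧ |b| ≤ (n : ℤ) ∧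
    ∀ i : ℤ, t i = if i = a then b else if i = b then a
      else if i = -a then -b else if i = -b then -a else i

/-- A paired transposition `((a, ±b))` of `B_n`. -/
def IsPairedTransposition (n : ℕ) (t : Equiv.Perm ℤ) : Prop :=
  ∃ a b : ℤ, 0 < a ∧ a ≤ (n : ℤ) ∧ b ≠ a ∧ b ≠ -a ∧ b ≠ 0 ∧ |b| ≤ (n : ℤ) ∧
    ∀ i : ℤ, t i = if i = a then b else if i = b then a
      else if i = -a then -b else if i = -b then -a else i

/-- The absolute length on `B_n`: the minimal number of reflections whose
product is `w`. -/
noncomputable def absLenB (n : ℕ) (w : Equiv.Perm ℤ) : ℕ :=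
  sInf {k | ∃ l : List (Equiv.Perm ℤ),
    l.length = k ∧ (∀ t ∈ l, IsReflB n t) ∧ l.prod = w}

/-- The absolute order on `B_n`. -/
noncomputable def absOrdB (n : ℕ) (u v : Equiv.Perm ℤ) : Prop :=
  absLenB n u + absLenB n (u⁻¹ * v) = absLenB n v



def GoodPair (n : ℕ) (x : Equiv.Perm ℤ × Finset ℤ) : Prop :=
  ∃ a b : ℤ, 0 < a ∧ a ≤ (n : ℤ) ∧ b ≠ a ∧ b ≠ 0 ∧ |b| ≤ (n : ℤ) ∧
    x.2 = {a, b, -a, -b} ∧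
    ∀ i : ℤ, x.1 i = if i = a then b else if i = b then a
      else if i = -a then -b else if i = -b then -a else i

def unionList (s : List (Finset ℤ)) : Finset ℤ := s.foldr (· ∪ ·) ∅

lemma subset_unionList {s : List (Finset ℤ)} {A : Finset ℤ} (h : A ∈ s) :
    A ⊆ unionList s := by
  induction s with
  | nil => simp at h
  | cons B s ih =>
    rcases List.mem_cons.1 h with h | h
    · subst h
      exact Finset.subset_union_left
    · exact (ih h).trans Finset.subset_union_right

lemma card_unionList_le (s : List (Finset ℤ)) :
    (unionList s).card ≤ (s.map Finset.card).sum := by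
  induction s with
  | nil => simp [unionList]
  | cons B s ih =>
    calc (unionList (B :: s)).card ≤ B.card + (unionList s).card :=
          Finset.card_union_le _ _
      _ ≤ B.card + (s.map Finset.card).sum := by omega
      _ = ((B :: s).map Finset.card).sum := by simp

lemma pairwise_of_card_unionList {s : List (Finset ℤ)}
    (h : (s.map Finset.card).sum ≤ (unionList s).card) :
    s.Pairwise Disjoint := by
  induction s with
  | nil => simp
  | cons B s ih =>
    simp only [List.map_cons, List.sum_cons] at h
    have h1 : (unionList (B :: s)).card ≤ B.card + (unionList s).card :=
      Finset.card_union_le _ _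
    have h2 := card_unionList_le s
    have hu : (unionList s).card = (s.map Finset.card).sum := by omega
    have h3 : (B ∪ unionList s).card = B.card + (unionList s).card := by
      show (unionList (B :: s)).card = _
      omega
    have hd : Disjoint B (unionList s) := by
      have := Finset.card_union_add_card_inter B (unionList s)
      have : (B ∩ unionList s).card = 0 := by omega
      rw [Finset.card_eq_zero] at this
      exact Finset.disjoint_iff_inter_eq_empty.2 this
    refine List.Pairwise.cons (fun A hA => hd.mono_right (subset_unionList hA))
      (ih (by omega))

lemma prod_moved_subset :
    ∀ (p : List (Equiv.Perm ℤ × Finset ℤ)),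
    (∀ x ∈ p, ∀ i : ℤ, x.1 i ≠ i → i ∈ x.2) →
    ∀ i : ℤ, (p.map Prod.fst).prod i ≠ i → i ∈ unionList (p.map Prod.snd) := by
  intro p
  induction p with
  | nil => simp
  | cons x p ih =>
    intro h i hi
    simp only [List.map_cons, List.prod_cons, Equiv.Perm.mul_apply] at hi
    by_cases hp : (p.map Prod.fst).prod i = i
    · rw [hp] at hi
      have := h x (by simp) i hi
      exact Finset.mem_union_left _ this
    · have := ih (fun y hy => h y (by simp [hy])) i hp
      exact Finset.mem_union_right _ this

lemma sum_le_and_eq {c : ℕ} : ∀ (l : List ℕ), (∀ x ∈ l, x ≤ c) →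
    l.sum ≤ c * l.length ∧ (c * l.length ≤ l.sum → ∀ x ∈ l, x = c) := by
  intro l
  induction l with
  | nil => simp
  | cons a l ih =>
    intro h
    obtain ⟨ih1, ih2⟩ := ih (fun x hx => h x (by simp [hx]))
    have ha : a ≤ c := h a (by simp)
    constructor
    · simp only [List.sum_cons, List.length_cons, Nat.mul_succ]; omega
    · intro hle x hx
      simp only [List.sum_cons, List.length_cons, Nat.mul_succ] at hle
      have hac : a = c := by omega
      rcases List.mem_cons.1 hx with hx | hx
      · exact hx ▸ hac
      · exact ih2 (by omega) x hx

lemma exists_pairs (n : ℕ) : ∀ (l : List (Equiv.Perm ℤ)),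
    (∀ t ∈ l, IsReflB n t) →
    ∃ p : List (Equiv.Perm ℤ × Finset ℤ), p.map Prod.fst = l ∧ ∀ x ∈ p, GoodPair n x := by
  intro l
  induction l with
  | nil => exact fun _ => ⟨[], rfl, by simp⟩
  | cons t l ih =>
    intro h
    obtain ⟨p, hp1, hp2⟩ := ih (fun s hs => h s (by simp [hs]))
    obtain ⟨a, b, h1, h2, h3, h4, h5, h6⟩ := h t (by simp)
    refine ⟨(t, ({a, b, -a, -b} : Finset ℤ)) :: p, by simp [hp1], ?_⟩
    intro x hx
    rcases List.mem_cons.1 hx with rfl | hx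
    · exact ⟨a, b, h1, h2, h3, h4, h5, rfl, h6⟩
    · exact hp2 x hx

lemma good_fix {n : ℕ} {x : Equiv.Perm ℤ × Finset ℤ} (hx : GoodPair n x) :
    ∀ i : ℤ, x.1 i ≠ i → i ∈ x.2 := by
  obtain ⟨a, b, _, _, _, _, _, hset, hform⟩ := hx
  intro i hi
  rw [hset]
  by_contra hmem
  simp only [Finset.mem_insert, Finset.mem_singleton, not_or] at hmem
  obtain ⟨m1, m2, m3, m4⟩ := hmem
  exact hi (by rw [hform i, if_neg m1, if_neg m2, if_neg m3, if_neg m4])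

lemma good_card_le {n : ℕ} {x : Equiv.Perm ℤ × Finset ℤ} (hx : GoodPair n x) :
    x.2.card ≤ 4 := by
  obtain ⟨a, b, _, _, _, _, _, hset, _⟩ := hx
  rw [hset]
  refine (Finset.card_insert_le _ _).trans ?_
  refine Nat.succ_le_succ ?_
  refine (Finset.card_insert_le _ _).trans ?_
  refine Nat.succ_le_succ ?_
  refine (Finset.card_insert_le _ _).trans ?_
  simp

lemma good_paired {n : ℕ} {x : Equiv.Perm ℤ × Finset ℤ} (hx : GoodPair n x)
    (hc : x.2.card = 4) : IsPairedTransposition n x.1 := by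
  obtain ⟨a, b, h1, h2, h3, h4, h5, hset, hform⟩ := hx
  refine ⟨a, b, h1, h2, h3, ?_, h4, h5, hform⟩
  intro hb
  subst hb
  rw [hset] at hc
  have he : ({a, -a, -a, -(-a)} : Finset ℤ) = {a, -a} := by
    ext i; simp [neg_neg]; tauto
  rw [he] at hc
  have : ({a, -a} : Finset ℤ).card ≤ 2 :=
    (Finset.card_insert_le _ _).trans (by simp)
  omega


/-- In the hyperoctahedral group `B_n` with `n` even, a fixed-point-free
element `w` lying below the Coxeter element `c = [1, 2, …, n]` in absolute
order and of absolute length exactly `n / 2` must be a product of `n / 2`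
disjoint paired transpositions. -/
theorem stmt_18 {n : ℕ} (hn : Even n) (hn2 : 2 ≤ n)
    (c w : Equiv.Perm ℤ)
    (hcB : IsSignedPerm n c)
    (hc1 : ∀ i : ℤ, 1 ≤ i → i < (n : ℤ) → c i = i + 1)
    (hc2 : c (n : ℤ) = -1)
    (hwB : IsSignedPerm n w)
    (hfpf : ∀ i : ℤ, 1 ≤ i → i ≤ (n : ℤ) → w i ≠ i)
    (hord : absOrdB n w c)
    (hlen : absLenB n w = n / 2) :
    ∃ l : List (Equiv.Perm ℤ), l.length = n / 2 ∧
      (∀ t ∈ l, IsPairedTransposition n t) ∧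
      l.Pairwise Equiv.Perm.Disjoint ∧ l.prod = w := by
  classical
  have hmpos : 0 < n / 2 := Nat.div_pos hn2 (by norm_num)
  have hne : {k | ∃ l : List (Equiv.Perm ℤ),
      l.length = k ∧ (∀ t ∈ l, IsReflB n t) ∧ l.prod = w}.Nonempty := by
    by_contra hcon
    rw [Set.not_nonempty_iff_eq_empty] at hcon
    rw [absLenB, hcon, Nat.sInf_empty] at hlen
    omega
  obtain ⟨l, hlenl, hrefl, hprod⟩ : ∃ l : List (Equiv.Perm ℤ),
      l.length = n / 2 ∧ (∀ t ∈ l, IsReflB n t) ∧ l.prod = w := by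
    have hmem := Nat.sInf_mem hne
    rw [absLenB] at hlen
    rw [hlen] at hmem
    exact hmem
  obtain ⟨p, hpfst, hgood⟩ := exists_pairs n l hrefl
  have hplen : p.length = n / 2 := by
    rw [← hpfst, List.length_map] at hlenl; exact hlenl
  set T : Finset ℤ := (Finset.Icc (-(n : ℤ)) (n : ℤ)).erase 0 with hT
  have hTcard : T.card = 2 * n := by
    have h0 : (0 : ℤ) ∈ Finset.Icc (-(n : ℤ)) (n : ℤ) := by
      rw [Finset.mem_Icc]
      constructor <;> [simp; simp]
    rw [hT, Finset.card_erase_of_mem h0, Int.card_Icc]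
    omega
  have hmoved : ∀ i : ℤ, i ∈ T → w i ≠ i := by
    intro i hi
    rw [hT, Finset.mem_erase, Finset.mem_Icc] at hi
    obtain ⟨hi0, hil, hiu⟩ := hi
    rcases lt_or_gt_of_ne hi0 with hneg | hpos
    · intro hcon
      have hf := hfpf (-i) (by omega) (by omega)
      apply hf
      have hcomm := hwB.1 i
      rw [hcomm, hcon]
    · exact hfpf i (by omega) hiu
  have hTU : T ⊆ unionList (p.map Prod.snd) := by
    intro i hi
    apply prod_moved_subset p (fun x hx => good_fix (hgood x hx))
    rw [hpfst, hprod]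
    exact hmoved i hi
  have h1 : T.card ≤ (unionList (p.map Prod.snd)).card := Finset.card_le_card hTU
  have h2 : (unionList (p.map Prod.snd)).card ≤ ((p.map Prod.snd).map Finset.card).sum :=
    card_unionList_le _
  have hbound : ∀ x ∈ (p.map Prod.snd).map Finset.card, x ≤ 4 := by
    intro x hx
    simp only [List.map_map, List.mem_map] at hx
    obtain ⟨y, hy, rfl⟩ := hx
    exact good_card_le (hgood y hy)
  obtain ⟨h3, h4⟩ := sum_le_and_eq ((p.map Prod.snd).map Finset.card) hbound
  have hlist : ((p.map Prod.snd).map Finset.card).length = n / 2 := by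
    simp [hplen]
  rw [hlist] at h3 h4
  have hnn : n / 2 * 2 = n := Nat.div_mul_cancel hn.two_dvd
  have hcards : ∀ x ∈ (p.map Prod.snd).map Finset.card, x = 4 := h4 (by omega)
  have hpd : (p.map Prod.snd).Pairwise Disjoint :=
    pairwise_of_card_unionList (by omega)
  refine ⟨l, hlenl, ?_, ?_, hprod⟩
  · intro t ht
    rw [← hpfst] at ht
    obtain ⟨x, hxp, rfl⟩ := List.mem_map.1 ht
    apply good_paired (hgood x hxp)
    apply hcards
    simp only [List.map_map, List.mem_map]
    exact ⟨x, hxp, rfl⟩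
  · rw [List.pairwise_map] at hpd
    rw [← hpfst, List.pairwise_map]
    refine hpd.imp_of_mem ?_
    intro x y hx hy hxy
    intro i
    by_contra hcon
    push_neg at hcon
    obtain ⟨hx1, hy1⟩ := hcon
    exact Finset.disjoint_left.1 hxy (good_fix (hgood x hx) i hx1)
      (good_fix (hgood y hy) i hy1)
end
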